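/- arXiv:2604.16296 — 9 statements merged into one kernel-verified Lean document; each statement's English description precedes it below -/
import Mathlib

section
/- Let a > b ≥ 1 be integers and Λ_{a,b} = {(m,s) ∈ ℤ² : m > 0, s > 0, (a/b)·m < a − s ≤ ((a−1)/b)·m + 1}. Then the cardinality of Λ_{a,b} equals (b + gcd(a−1, b) − gcd(a, b) − 1)/2. -/
/-!
Membership in `Lam a b` says `0 < m < b` and `a - s ∈ (⌊am/b⌋, ⌊(a-1)m/b⌋ + 1]`, so the set has
`∑_{0<m<b} (⌊(a-1)m/b⌋ - ⌊am/b⌋ + 1)` elements. Instead of Pick's theorem, each floor sum is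
evaluated by pairing `m` with `b - m`: `⌊cm/b⌋ + ⌊c(b-m)/b⌋ = c - 1 + [b ∣ cm]`, and exactly
`gcd(c, b) - 1` of the `m ∈ (0, b)` satisfy `b ∣ cm`, so
`2 ∑_{0<m<b} ⌊cm/b⌋ = (c-1)(b-1) + gcd(c, b) - 1`.
-/

def Lam (a b : ℤ) : Set (ℤ × ℤ) :=
  {p | 0 < p.1 ∧ 0 < p.2 ∧
    (a : ℚ) / b * p.1 < (a : ℚ) - p.2 ∧
    (a : ℚ) - p.2 ≤ ((a : ℚ) - 1) / b * p.1 + 1}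

open Finset

theorem Int.dvd_mul_iff_ediv_gcd_dvd {b : ℤ} (hb : b ≠ 0) (c m : ℤ) :
    b ∣ c * m ↔ b / c.gcd b ∣ m := by
  obtain ⟨g, c', b', hg, hcop, rfl, rfl⟩ :=
    Int.exists_gcd_one' (Int.gcd_pos_of_ne_zero_right c hb)
  have hg0 : (g : ℤ) ≠ 0 := by exact_mod_cast hg.ne'
  rw [Int.gcd_mul_right, hcop, one_mul, Int.natAbs_natCast, Int.mul_ediv_cancel _ hg0,
    mul_right_comm, mul_dvd_mul_iff_right hg0]
  exact ⟨(Int.isCoprime_iff_gcd_eq_one.mpr hcop).symm.dvd_of_dvd_mul_left,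
    fun h => h.mul_left c'⟩

theorem Int.card_filter_dvd_mul_Ioo {b : ℤ} (hb : 0 < b) (c : ℤ) :
    (#{m ∈ Ioo 0 b | b ∣ c * m} : ℤ) = c.gcd b - 1 := by
  have hg : 0 < (c.gcd b : ℤ) := by exact_mod_cast Int.gcd_pos_of_ne_zero_right c hb.ne'
  have hb' : 0 < b / c.gcd b := Int.ediv_pos_of_pos_of_dvd hb hg.le (Int.gcd_dvd_right c b)
  have hIoc : (#{m ∈ Ioc 0 b | b ∣ c * m} : ℤ) = c.gcd b := by
    have hquot : (b : ℚ) / (b / c.gcd b : ℤ) = c.gcd b := by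
      rw [Int.cast_div (Int.gcd_dvd_right c b) (by exact_mod_cast hg.ne'),
        div_div_cancel₀ (by exact_mod_cast hb.ne'), Int.cast_natCast]
    simp_rw [Int.dvd_mul_iff_ediv_gcd_dvd hb.ne', Int.Ioc_filter_dvd_card _ _ hb', hquot]
    simp [hg.le]
  rw [← Ioo_insert_right hb, filter_insert, if_pos (dvd_mul_left b c),
    card_insert_of_notMem (by simp)] at hIoc
  push_cast at hIoc
  omega

theorem Int.mul_ediv_add_mul_sub_ediv {b : ℤ} (hb : 0 < b) (c m : ℤ) :
    c * m / b + c * (b - m) / b = c - 1 + if b ∣ c * m then 1 else 0 := by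
  rw [show c * (b - m) = -(c * m) + c * b by ring, Int.add_mul_ediv_right _ _ hb.ne',
    Int.neg_ediv, Int.sign_eq_one_of_pos hb]
  split_ifs <;> ring

theorem Int.two_mul_sum_Ioo_mul_ediv {b : ℤ} (hb : 0 < b) (c : ℤ) :
    2 * ∑ m ∈ Ioo 0 b, c * m / b = (c - 1) * (b - 1) + c.gcd b - 1 := by
  have hmaps : ∀ m ∈ Ioo 0 b, b - m ∈ Ioo 0 b := fun m hm => by rw [mem_Ioo] at hm ⊢; omega
  have hreflect : ∑ m ∈ Ioo 0 b, c * (b - m) / b = ∑ m ∈ Ioo 0 b, c * m / b :=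
    sum_nbij' (b - ·) (b - ·) hmaps hmaps (fun m _ => sub_sub_cancel b m)
      (fun m _ => sub_sub_cancel b m) fun _ _ => rfl
  rw [two_mul]
  nth_rw 2 [← hreflect]
  rw [← sum_add_distrib]
  simp_rw [Int.mul_ediv_add_mul_sub_ediv hb, sum_add_distrib, sum_boole, sum_const, Int.card_Ioo,
    Int.card_filter_dvd_mul_Ioo hb]
  rw [nsmul_eq_mul, Int.toNat_of_nonneg (by omega)]
  ring

theorem mem_Lam_iff {a b : ℤ} (ha : 1 < a) (hb : 0 < b) (m s : ℤ) :
    (m, s) ∈ Lam a b ↔ m ∈ Ioo 0 b ∧ a - s ∈ Ioc (a * m / b) ((a - 1) * m / b + 1) := by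
  have hbQ : (0 : ℚ) < b := by exact_mod_cast hb
  have hlower : (a : ℚ) / b * m < a - s ↔ a * m < (a - s) * b := by
    rw [div_mul_eq_mul_div, div_lt_iff₀ hbQ]; norm_cast
  have hupper : (a : ℚ) - s ≤ (a - 1) / b * m + 1 ↔ (a - s - 1) * b ≤ (a - 1) * m := by
    rw [div_mul_eq_mul_div, ← sub_le_iff_le_add, le_div_iff₀ hbQ]; norm_cast
  simp only [Lam, Set.mem_ofPred_eq, hlower, hupper, mem_Ioo, mem_Ioc]
  rw [Int.ediv_lt_iff_lt_mul hb, ← sub_le_iff_le_add, Int.le_ediv_iff_mul_le hb]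
  constructor
  · rintro ⟨hm, -, hl, hu⟩
    exact ⟨⟨hm, by linarith⟩, hl, hu⟩
  · rintro ⟨⟨hm, hmb⟩, hl, hu⟩
    exact ⟨hm, by nlinarith, hl, hu⟩

theorem Lam_eq_biUnion {a b : ℤ} (ha : 1 < a) (hb : 0 < b) :
    Lam a b = ↑((Ioo 0 b).biUnion fun m =>
      (Ioc (a * m / b) ((a - 1) * m / b + 1)).image fun t => (m, a - t)) := by
  ext ⟨m, s⟩
  simp only [mem_Lam_iff ha hb, coe_biUnion, mem_coe, coe_image, Set.mem_iUnion, Set.mem_image,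
    Prod.mk.injEq]
  constructor
  · rintro ⟨hm, hs⟩
    exact ⟨m, hm, a - s, hs, rfl, sub_sub_cancel a s⟩
  · rintro ⟨m, hm, t, ht, rfl, rfl⟩
    rw [sub_sub_cancel]
    exact ⟨hm, ht⟩

theorem ncard_Lam {a b : ℤ} (ha : 1 < a) (hb : 0 < b) :
    ((Lam a b).ncard : ℤ) = ∑ m ∈ Ioo 0 b, ((a - 1) * m / b + 1 - a * m / b) := by
  rw [Lam_eq_biUnion ha hb, Set.ncard_coe_finset, card_biUnion, Nat.cast_sum]
  · refine sum_congr rfl fun m hm => ?_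
    have hcol : a * m / b ≤ (a - 1) * m / b + 1 := by
      rw [← Int.add_mul_ediv_right _ _ hb.ne', one_mul]
      exact Int.ediv_le_ediv hb (by linarith [(mem_Ioo.mp hm).2])
    rw [card_image_of_injective _ fun t t' h => by simpa using h, Int.card_Ioc,
      Int.toNat_of_nonneg (by omega)]
  · intro m _ m' _ hne
    simp only [Function.onFun, disjoint_left, mem_image]
    rintro _ ⟨t, -, rfl⟩ ⟨t', -, h⟩
    exact hne (congrArg Prod.fst h).symm

theorem Lam_card (a b : ℤ) (hb : 1 ≤ b) (hab : b < a) :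
    2 * ((Lam a b).ncard : ℤ) = b + (Int.gcd (a - 1) b : ℤ) - (Int.gcd a b : ℤ) - 1 := by
  have hb0 : 0 < b := hb
  have hsub := Int.two_mul_sum_Ioo_mul_ediv hb0 (a - 1)
  have hfull := Int.two_mul_sum_Ioo_mul_ediv hb0 a
  rw [ncard_Lam (by omega) hb0, sum_sub_distrib, sum_add_distrib, sum_const, Int.card_Ioo,
    nsmul_eq_mul, Int.toNat_of_nonneg (by omega)]
  linear_combination hsub - hfull
end

section
/- Let a > b ≥ 1 be integers and Λ_{a,b} = {(m,s) ∈ ℤ² : m > 0, s > 0, (a/b)·m < a − s ≤ ((a−1)/b)·m + 1}. Then Λ_{a,b} is empty if and only if b divides a. -/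
theorem Lam_empty_iff (a b : ℤ) (hb : 1 ≤ b) (hab : b < a) :
    Lam a b = ∅ ↔ b ∣ a := by
  have hbQ : (0:ℚ) < b := by exact_mod_cast lt_of_lt_of_le one_pos hb
  constructor
  · intro h
    by_contra hdvd
    have hb2 : 2 ≤ b := by
      rcases lt_or_eq_of_le hb with h1 | h1
      · omega
      · exact absurd (h1 ▸ one_dvd a) hdvd
    set q := a / b with hq
    set r := a % b with hr
    have hdiv : b * q + r = a := Int.mul_ediv_add_emod a b
    have hr0 : 0 ≤ r := Int.emod_nonneg a (by omega)
    have hrb : r < b := Int.emod_lt_of_pos a (by omega)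
    have hrne : r ≠ 0 := fun h0 => hdvd (Int.dvd_of_emod_eq_zero (hr ▸ h0))
    have hr1 : 1 ≤ r := by omega
    have hq1 : 1 ≤ q := by nlinarith [hdiv, hrb, hab, hb2]
    have h1 : a < (q + 1) * b := by
      have e : (q+1)*b = b*q + b := by ring
      linarith
    have h2 : q * b ≤ a - 1 := by
      have e : q*b = b*q := by ring
      linarith
    have hmem : (1, a - q - 1) ∈ Lam a b := by
      have key : b - 1 ≤ b*q - q := by nlinarith
      refine ⟨one_pos, by simp only; linarith, ?_, ?_⟩
      · simp only
        have h1Q : (a:ℚ) < (q + 1) * b := by exact_mod_cast h1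
        push_cast
        rw [mul_one, div_lt_iff₀ hbQ]
        nlinarith [h1Q]
      · simp only
        have h2Q : (q:ℚ) * b ≤ (a:ℚ) - 1 := by exact_mod_cast h2
        have hq' : (q:ℚ) ≤ ((a:ℚ) - 1) / b := by rw [le_div_iff₀ hbQ]; linarith
        push_cast
        rw [mul_one]
        linarith [hq']
    rw [h] at hmem
    exact hmem
  · rintro ⟨c, rfl⟩
    rw [Set.eq_empty_iff_forall_notMem]
    rintro ⟨m, s⟩ ⟨hm, hs, h1, h2⟩
    push_cast at h1 h2
    have hbne : (b:ℚ) ≠ 0 := ne_of_gt hbQ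
    rw [mul_div_cancel_left₀ _ hbne] at h1
    have h1' : (c * m : ℤ) < b * c - s := by exact_mod_cast h1
    have h1'' : (c:ℚ) * m + 1 ≤ (b:ℚ) * c - s := by exact_mod_cast Int.add_one_le_iff.mpr h1'
    have h2' : (b:ℚ) * c - s - 1 ≤ ((b:ℚ) * c - 1) * m / b := by
      rw [div_mul_eq_mul_div] at h2; linarith
    rw [le_div_iff₀ hbQ] at h2'
    have hmQ : (1:ℚ) ≤ m := by exact_mod_cast hm
    nlinarith
end

section
/- Let a > b ≥ 1 be integers and Λ_{a,b} = {(m,s) ∈ ℤ² : m > 0, s > 0, (a/b)·m < a − s ≤ ((a−1)/b)·m + 1}. Then the map (m,s) ↦ s − m restricted to Λ_{a,b} is injective. -/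
lemma Lam_key (a b : ℤ) (hb : 1 ≤ b) (hab : b < a) {p q : ℤ × ℤ}
    (hp : p ∈ Lam a b) (hq : q ∈ Lam a b)
    (hle : p.1 ≤ q.1) (hd : q.2 - q.1 = p.2 - p.1) : p.1 = q.1 := by
  obtain ⟨hm, hs, h1, h2⟩ := hp
  obtain ⟨hm', hs', h1', h2'⟩ := hq
  by_contra hne
  have he1 : p.1 + 1 ≤ q.1 := lt_of_le_of_ne hle hne
  have hb' : (0:ℚ) < (b:ℚ) := by exact_mod_cast hb.trans_lt' (by norm_num)
  have ha' : (0:ℚ) < (a:ℚ) := by exact_mod_cast lt_trans (lt_of_lt_of_le (by norm_num) hb) hab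
  -- clear denominators
  rw [div_mul_eq_mul_div, div_lt_iff₀ hb'] at h1'
  rw [div_mul_eq_mul_div] at h2
  have h2' : ((b:ℚ)) * ((a:ℚ) - p.2 - 1) ≤ ((a:ℚ) - 1) * p.1 := by
    have := sub_le_iff_le_add.mpr h2
    calc (b:ℚ) * ((a:ℚ) - p.2 - 1) ≤ (b:ℚ) * (((a:ℚ)-1) * p.1 / b) := by
          apply mul_le_mul_of_nonneg_left _ hb'.le
          linarith
      _ = ((a:ℚ) - 1) * p.1 := by field_simp
  have hq2 : (q.2 : ℚ) = p.2 + (q.1 - p.1) := by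
    have : q.2 = p.2 + (q.1 - p.1) := by omega
    exact_mod_cast this
  have he1' : (1:ℚ) ≤ (q.1 : ℚ) - p.1 := by
    have : (p.1 : ℚ) + 1 ≤ q.1 := by exact_mod_cast he1
    linarith
  have hm1 : (1:ℚ) ≤ (p.1 : ℚ) := by exact_mod_cast hm
  have hba : (b:ℚ) < (a:ℚ) := by exact_mod_cast hab
  have hb1 : (1:ℚ) ≤ (b:ℚ) := by exact_mod_cast hb
  set e : ℚ := (q.1 : ℚ) - p.1 with hedef
  have hq1 : (q.1 : ℚ) = (p.1 : ℚ) + e := by ring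
  rw [hq2, hq1] at h1'
  -- h1' : a * (p.1 + e) < b * (a - (p.2 + e))
  -- h2' : b * (a - p.2 - 1) ≤ (a - 1) * p.1
  nlinarith [mul_le_mul_of_nonneg_left he1' ha'.le, mul_le_mul_of_nonneg_left he1' hb'.le,
    mul_le_mul_of_nonneg_left hm1 (le_of_lt ha')]

theorem Lam_diff_inj (a b : ℤ) (hb : 1 ≤ b) (hab : b < a) :
    Set.InjOn (fun p : ℤ × ℤ => p.2 - p.1) (Lam a b) := by
  intro p hp q hq h
  simp only at h
  rcases le_total p.1 q.1 with hle | hle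
  · have h1 := Lam_key a b hb hab hp hq hle (by omega)
    have : p.2 = q.2 := by omega
    exact Prod.ext h1 this
  · have h1 := Lam_key a b hb hab hq hp hle (by omega)
    have : p.2 = q.2 := by omega
    exact Prod.ext h1.symm this
end

section
/- Let a > b ≥ 1 be integers. For any (m,s) ∈ Λ_{a,b}, if (m',s') ∈ Λ_{a,b} with m < m', then s > s'. -/
theorem Lam_antitone (a b : ℤ) (hb : 1 ≤ b) (hab : b < a)
    (m s m' s' : ℤ) (h : (m, s) ∈ Lam a b) (h' : (m', s') ∈ Lam a b)
    (hmm : m < m') : s' < s := by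
  obtain ⟨hm, hs, h1, h2⟩ := h
  obtain ⟨hm', hs', h1', h2'⟩ := h'
  simp only at *
  have hbq : (0 : ℚ) < (b : ℚ) := by exact_mod_cast lt_of_lt_of_le one_pos hb
  -- clear denominators
  have H2 : ((a : ℚ) - s) * b ≤ ((a : ℚ) - 1) * m + b := by
    have := mul_le_mul_of_nonneg_right h2 hbq.le
    rw [add_mul, div_mul_eq_mul_div, div_mul_cancel₀ _ hbq.ne'] at this
    linarith
  have H1' : (a : ℚ) * m' < ((a : ℚ) - s') * b := by
    have := mul_lt_mul_of_pos_right h1' hbq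
    rw [div_mul_eq_mul_div, div_mul_cancel₀ _ hbq.ne'] at this
    linarith
  have hmq : (1 : ℚ) ≤ (m : ℚ) := by exact_mod_cast hm
  have haq : (b : ℚ) < a := by exact_mod_cast hab
  have haq0 : (0 : ℚ) < a := by exact_mod_cast lt_trans (lt_of_lt_of_le one_pos hb) hab
  have hmid : ((a : ℚ) - 1) * m + b < (a : ℚ) * (m + 1) := by nlinarith
  have hstep : (a : ℚ) * (m + 1) ≤ (a : ℚ) * m' := by
    have : (m : ℚ) + 1 ≤ m' := by exact_mod_cast hmm
    nlinarith
  have : ((a : ℚ) - s) * b < ((a : ℚ) - s') * b := by linarith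
  have hfin : (s' : ℚ) < s := by
    have := lt_of_mul_lt_mul_right (by linarith : ((a:ℚ) - s) * b < ((a:ℚ) - s') * b) hbq.le
    linarith
  exact_mod_cast hfin
end

section
/- Let a > b ≥ 1 and ℓ, u ≥ 1 be integers. Then the following are equivalent: (1) for every r ∈ [0,1], 3u·r + 3ℓ·(1−r) ≥ min{(3a−3)r, 3b(1−r)}, and there exists r ∈ [0,1] with 3u·r + 3ℓ·(1−r) < min{3a·r, 3b(1−r)}; (2) a − ((a−1)/b)·ℓ − 1 ≤ u < a − (a/b)·ℓ. -/
set_option maxHeartbeats 1600000 in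
theorem bad_terms_iff (a b l u : ℤ) (hb : 1 ≤ b) (hab : b < a)
    (hl : 1 ≤ l) (hu : 1 ≤ u) :
    ((∀ r : ℝ, r ∈ Set.Icc (0 : ℝ) 1 →
        min ((3 * a - 3) * r) (3 * b * (1 - r)) ≤ 3 * u * r + 3 * l * (1 - r)) ∧
      (∃ r ∈ Set.Icc (0 : ℝ) 1,
        3 * u * r + 3 * l * (1 - r) < min (3 * a * r) (3 * b * (1 - r)))) ↔
    ((a : ℝ) - ((a : ℝ) - 1) / b * l - 1 ≤ (u : ℝ) ∧
      (u : ℝ) < (a : ℝ) - (a : ℝ) / b * l) := by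
  have hb' : (1:ℝ) ≤ (b:ℝ) := by exact_mod_cast hb
  have hl' : (1:ℝ) ≤ (l:ℝ) := by exact_mod_cast hl
  have hu' : (1:ℝ) ≤ (u:ℝ) := by exact_mod_cast hu
  have ha' : (b:ℝ) + 1 ≤ (a:ℝ) := by exact_mod_cast (by omega : b + 1 ≤ a)
  set A := (a:ℝ) with hAdef
  set B := (b:ℝ) with hBdef
  set L := (l:ℝ) with hLdef
  set U := (u:ℝ) with hUdef
  have hB0 : (0:ℝ) < B := by linarith
  have hA2 : (2:ℝ) ≤ A := by linarith
  have hA1 : (0:ℝ) < A - 1 := by linarith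
  have hL0 : (0:ℝ) < L := by linarith
  have hU0 : (0:ℝ) < U := by linarith
  have hD1 : (0:ℝ) < A + B - 1 := by linarith
  have hD2 : (0:ℝ) < A + B := by linarith
  have hdiv1 : (A - 1) / B * L = (A - 1) * L / B := by ring
  have hdiv2 : A / B * L = A * L / B := by ring
  constructor
  · rintro ⟨h1, r, ⟨hr0, hr1⟩, h2⟩
    rw [lt_min_iff] at h2
    obtain ⟨h2a, h2b⟩ := h2
    have hrpos : 0 < r := by
      rcases lt_or_eq_of_le hr0 with h | h
      · exact h
      · exfalso; rw [← h] at h2a; nlinarith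
    have hr1pos : 0 < 1 - r := by
      rcases lt_or_eq_of_le hr1 with h | h
      · linarith
      · exfalso; rw [h] at h2b; nlinarith
    constructor
    · -- use h1 at r* = B/(A+B-1)
      have hmem : B / (A + B - 1) ∈ Set.Icc (0:ℝ) 1 := by
        constructor
        · positivity
        · rw [div_le_one hD1]; linarith
      have hkey := h1 _ hmem
      have heq : (3*A - 3) * (B / (A + B - 1)) = 3*B*(1 - B / (A + B - 1)) := by
        field_simp
        ring
      rw [heq, min_self] at hkey
      have hkey2 : 3*B*(A-1) ≤ 3*U*B + 3*L*(A-1) := by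
        have h3 := mul_le_mul_of_nonneg_right hkey hD1.le
        have e1 : (3*B*(1 - B/(A+B-1))) * (A+B-1) = 3*B*(A-1) := by field_simp; ring
        have e2 : (3*U*(B/(A+B-1)) + 3*L*(1 - B/(A+B-1))) * (A+B-1)
            = 3*U*B + 3*L*(A-1) := by field_simp; ring
        rw [e1, e2] at h3
        exact h3
      rw [hdiv1]
      have hgoal : A - 1 - U ≤ (A - 1) * L / B := by
        rw [le_div_iff₀ hB0]; nlinarith
      linarith
    · -- derive U*B + A*L < A*B from witness
      have p1 : L*(1-r) < (A-U)*r := by nlinarith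
      have p2 : U*r < (B-L)*(1-r) := by nlinarith
      have p3 : (L*(1-r))*(U*r) < ((A-U)*r)*((B-L)*(1-r)) :=
        mul_lt_mul'' p1 p2 (by positivity) (by positivity)
      rw [hdiv2]
      have ht : 0 < r * (1 - r) := mul_pos hrpos hr1pos
      have q : 0 < (A*B - A*L - U*B) * (r*(1-r)) := by linarith [p3]
      have q2 : 0 < A*B - A*L - U*B := by
        have := div_pos q ht
        rwa [mul_div_cancel_right₀ _ ht.ne'] at this
      have hgoal : A * L / B < A - U := by
        rw [div_lt_iff₀ hB0]
        linarith [q2]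
      linarith
  · rintro ⟨hc1, hc2⟩
    rw [hdiv1] at hc1
    rw [hdiv2] at hc2
    have k1 : (A-1)*B ≤ U*B + (A-1)*L := by
      have h1 : A - 1 - U ≤ (A - 1) * L / B := by linarith
      rw [le_div_iff₀ hB0] at h1
      nlinarith
    have k2 : U*B + A*L < A*B := by
      have h1 : A * L / B < A - U := by linarith
      rw [div_lt_iff₀ hB0] at h1
      nlinarith
    constructor
    · intro r ⟨hr0, hr1⟩
      rcases le_or_gt ((3*↑a - 3) * r) (3*↑u*r + 3*↑l*(1-r)) with h | h
      · exact le_trans (min_le_left _ _) h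
      · refine le_trans (min_le_right _ _) ?_
        -- goal : 3*B*(1-r) ≤ 3*U*r + 3*L*(1-r)
        have hF1 := mul_lt_mul_of_pos_right h hB0
        have hF2 := mul_le_mul_of_nonneg_right k1 hr0
        have hP : 0 < (A-1)*r - B*(1-r) := by
          nlinarith [hF1, hF2, hL0]
        have hF3 := mul_le_mul_of_nonneg_right k1 (by linarith : (0:ℝ) ≤ 1 - r)
        nlinarith [hP, hF3, hA1, hU0, mul_pos hU0 hP]
    · refine ⟨B / (A + B), ⟨by positivity, by rw [div_le_one hD2]; linarith⟩, ?_⟩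
      rw [lt_min_iff]
      have hfr : 3*U*(B/(A+B)) + 3*L*(1 - B/(A+B)) = (3*U*B + 3*L*A)/(A+B) := by
        field_simp; try ring
      have ha1 : 3*A*(B/(A+B)) = 3*A*B/(A+B) := by
        field_simp; try ring
      have hb1 : 3*B*(1 - B/(A+B)) = 3*A*B/(A+B) := by
        field_simp; try ring
      rw [hfr, ha1, hb1]
      constructor <;>
      · rw [div_lt_div_iff₀ hD2 hD2]
        nlinarith [k2, hD2]
end

section
/- In the formal power series ring ℚ[[x, y]], the identity (xy − xy/(1 + x³ + y³))·1 = xy·(x³ + y³)/(1 + x³ + y³) holds, and moreover (x·y·(x³+y³)/(1+x³+y³))^p = x^p·y^p·((y³/(1+y³))^p + (x³/(1+x³))^p + x³y³·H(x³, y³)) for some formal power series H in two variables, for every integer p ≥ 1. -/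
open MvPowerSeries

noncomputable def Xv : MvPowerSeries (Fin 2) ℚ := MvPowerSeries.X 0
noncomputable def Yv : MvPowerSeries (Fin 2) ℚ := MvPowerSeries.X 1

/-!
With `A = x³`, `B = y³`, put `s = (A + B)/(1 + A + B)`, `a = A/(1 + A)`, `b = B/(1 + B)`.
Clearing denominators, `s - a - b = -A B (2 + A + B) / ((1 + A + B)(1 + A)(1 + B))`, so `A B`
divides `s - (a + b)` and, trivially, `a b`. Modulo any common divisor `d` of `s - (a + b)` and
`a b` we have `s ≡ a + b` and `(a + b)ⁿ ≡ aⁿ + bⁿ`, hence `d ∣ sⁿ - aⁿ - bⁿ` for `n ≥ 1`.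
-/

section CommRing

variable {R : Type*} [CommRing R]

theorem mul_dvd_add_pow_sub_pow_sub_pow (a b : R) {n : ℕ} (hn : n ≠ 0) :
    a * b ∣ (a + b) ^ n - a ^ n - b ^ n := by
  obtain ⟨m, rfl⟩ := Nat.exists_eq_succ_of_ne_zero hn
  induction m with
  | zero => simp
  | succ m ih =>
    have hstep : (a + b) ^ (m + 2) - a ^ (m + 2) - b ^ (m + 2)
        = (a + b) * ((a + b) ^ (m + 1) - a ^ (m + 1) - b ^ (m + 1)) + a * b * (a ^ m + b ^ m) := by
      ring
    rw [hstep]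
    exact dvd_add (dvd_mul_of_dvd_right (ih m.succ_ne_zero) _) (dvd_mul_right _ _)

theorem dvd_pow_sub_pow_sub_pow {d s a b : R} (hs : d ∣ s - (a + b)) (hab : d ∣ a * b)
    {n : ℕ} (hn : n ≠ 0) : d ∣ s ^ n - a ^ n - b ^ n := by
  have hsplit : s ^ n - a ^ n - b ^ n
      = (s ^ n - (a + b) ^ n) + ((a + b) ^ n - a ^ n - b ^ n) := by ring
  rw [hsplit]
  exact dvd_add (hs.trans (sub_dvd_pow_sub_pow _ _ n))
    (hab.trans (mul_dvd_add_pow_sub_pow_sub_pow a b hn))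

theorem mul_dvd_sub_of_mul_inverses {A B u v w : R} (hu : (1 + A + B) * u = 1)
    (hv : (1 + A) * v = 1) (hw : (1 + B) * w = 1) :
    A * B ∣ (A + B) * u - (A * v + B * w) := by
  refine ⟨-(2 + A + B) * u * v * w, ?_⟩
  linear_combination A * v * (1 + B) * w * hu + A * v * hw + B * w * (1 + A) * v * hu + B * w * hv
    - (A + B) * u * (1 + B) * w * hv - (A + B) * u * hw

end CommRing

theorem taylor_expansion_S_pp :
    (Xv * Yv - Xv * Yv * (1 + Xv ^ 3 + Yv ^ 3)⁻¹
        = Xv * Yv * (Xv ^ 3 + Yv ^ 3) * (1 + Xv ^ 3 + Yv ^ 3)⁻¹) ∧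
    ∀ p : ℕ, 1 ≤ p → ∃ H : MvPowerSeries (Fin 2) ℚ,
      (Xv * Yv * (Xv ^ 3 + Yv ^ 3) * (1 + Xv ^ 3 + Yv ^ 3)⁻¹) ^ p
        = Xv ^ p * Yv ^ p *
            ((Yv ^ 3 * (1 + Yv ^ 3)⁻¹) ^ p + (Xv ^ 3 * (1 + Xv ^ 3)⁻¹) ^ p
              + Xv ^ 3 * Yv ^ 3 * H) := by
  have hu : (1 + Xv ^ 3 + Yv ^ 3) * (1 + Xv ^ 3 + Yv ^ 3)⁻¹ = 1 :=
    MvPowerSeries.mul_inv_cancel _ (by simp [Xv, Yv])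
  have hv : (1 + Xv ^ 3) * (1 + Xv ^ 3)⁻¹ = 1 := MvPowerSeries.mul_inv_cancel _ (by simp [Xv])
  have hw : (1 + Yv ^ 3) * (1 + Yv ^ 3)⁻¹ = 1 := MvPowerSeries.mul_inv_cancel _ (by simp [Yv])
  refine ⟨by linear_combination -(Xv * Yv) * hu, fun p hp => ?_⟩
  have hab : Xv ^ 3 * Yv ^ 3 ∣ Xv ^ 3 * (1 + Xv ^ 3)⁻¹ * (Yv ^ 3 * (1 + Yv ^ 3)⁻¹) :=
    ⟨(1 + Xv ^ 3)⁻¹ * (1 + Yv ^ 3)⁻¹, by ring⟩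
  obtain ⟨H, hH⟩ :=
    dvd_pow_sub_pow_sub_pow (mul_dvd_sub_of_mul_inverses hu hv hw) hab (n := p) (by omega)
  refine ⟨H, ?_⟩
  rw [mul_assoc (Xv * Yv), mul_pow, mul_pow, ← hH]
  ring
end

section
/- Define the function c: ℝ × ℝ → ℝ by c(t, t∨) = 3(k+1)t + ℓt∨ − (t∨ − 9m)(t + 3m) − (3k(k+1) + 3ℓ(ℓ+1) + 9m(3m−1))/2, where k = ⌊t⌋, ℓ = ⌊t∨/3⌋, m = ⌊(t∨ − 3t)/9 + 1/3⌋. Then c is invariant under the two translations (t, t∨) ↦ (t − 3, t∨) and (t, t∨) ↦ (t, t∨ − 9), i.e. c descends to a function on (ℝ/3ℤ) × (ℝ/9ℤ). -/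
noncomputable def costC (t tv : ℝ) : ℝ :=
  let k : ℤ := ⌊t⌋
  let l : ℤ := ⌊tv / 3⌋
  let m : ℤ := ⌊(tv - 3 * t) / 9 + 1 / 3⌋
  3 * ((k : ℝ) + 1) * t + (l : ℝ) * tv - (tv - 9 * m) * (t + 3 * m)
    - (3 * k * (k + 1) + 3 * l * (l + 1) + 9 * m * (3 * m - 1)) / 2

theorem costC_periodic (t tv : ℝ) :
    costC (t - 3) tv = costC t tv ∧ costC t (tv - 9) = costC t tv := by
  have h1 : ⌊t - 3⌋ = ⌊t⌋ - 3 := by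
    rw [show t - 3 = t + (-3 : ℤ) by push_cast; ring, Int.floor_add_intCast]; ring
  have h2 : ⌊(tv - 3 * (t - 3)) / 9 + 1 / 3⌋ = ⌊(tv - 3 * t) / 9 + 1 / 3⌋ + 1 := by
    rw [show (tv - 3 * (t - 3)) / 9 + 1 / 3 = ((tv - 3 * t) / 9 + 1 / 3) + (1 : ℤ) by
      push_cast; ring, Int.floor_add_intCast]
  have h3 : ⌊(tv - 9) / 3⌋ = ⌊tv / 3⌋ - 3 := by
    rw [show (tv - 9) / 3 = tv / 3 + (-3 : ℤ) by push_cast; ring, Int.floor_add_intCast]; ring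
  have h4 : ⌊(tv - 9 - 3 * t) / 9 + 1 / 3⌋ = ⌊(tv - 3 * t) / 9 + 1 / 3⌋ - 1 := by
    rw [show (tv - 9 - 3 * t) / 9 + 1 / 3 = ((tv - 3 * t) / 9 + 1 / 3) + (-1 : ℤ) by
      push_cast; ring, Int.floor_add_intCast]; ring
  constructor <;> simp only [costC, h1, h2, h3, h4] <;> push_cast <;> ring
end

section
/- Let c be as in the paper: c(t, t∨) = 3(k+1)t + ℓt∨ − (t∨ − 9m)(t + 3m) − (3k(k+1) + 3ℓ(ℓ+1) + 9m(3m−1))/2 with k = ⌊t⌋, ℓ = ⌊t∨/3⌋, m = ⌊(t∨−3t)/9 + 1/3⌋. For fixed t∨ ∈ [0, 3], the function x ↦ c(x, t∨) on [0, 3] is piecewise affine with slope 3 − t∨ on [0,1], slope 6 − t∨ on [1, 1 + t∨/3], slope −(t∨ + 3) on [1 + t∨/3, 2], and slope −t∨ on [2, 3]. -/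
lemma floor_eq' (r : ℝ) (n : ℤ) (h1 : (n : ℝ) ≤ r) (h2 : r < n + 1) : ⌊r⌋ = n :=
  Int.floor_eq_iff.mpr ⟨h1, h2⟩

lemma costC_eval (x tv : ℝ) (k m : ℤ) (hk : ⌊x⌋ = k)
    (hm : ⌊(tv - 3 * x) / 9 + 1 / 3⌋ = m) :
    costC x tv = 3 * ((k : ℝ) + 1) * x + (⌊tv / 3⌋ : ℝ) * tv
      - (tv - 9 * m) * (x + 3 * m)
      - (3 * (k : ℝ) * (k + 1) + 3 * (⌊tv / 3⌋ : ℝ) * ((⌊tv / 3⌋ : ℝ) + 1)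
          + 9 * m * (3 * m - 1)) / 2 := by
  simp only [costC, hk, hm]
  try push_cast
  try ring

theorem costC_slopes (tv : ℝ) (h0 : 0 ≤ tv) (h3 : tv ≤ 3) :
    ∃ C₁ C₂ C₃ C₄ : ℝ,
      (∀ x ∈ Set.Icc (0 : ℝ) 1, costC x tv = (3 - tv) * x + C₁) ∧
      (∀ x ∈ Set.Icc (1 : ℝ) (1 + tv / 3), costC x tv = (6 - tv) * x + C₂) ∧
      (∀ x ∈ Set.Icc (1 + tv / 3) 2, costC x tv = -(tv + 3) * x + C₃) ∧
      (∀ x ∈ Set.Icc (2 : ℝ) 3, costC x tv = -tv * x + C₄) := by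
  set L : ℝ := ((⌊tv / 3⌋ : ℤ) : ℝ) with hLdef
  refine ⟨L * tv - 3 * L * (L + 1) / 2,
          L * tv - 3 * L * (L + 1) / 2 - 3,
          L * tv - 3 * L * (L + 1) / 2 + 3 * tv + 6,
          L * tv - 3 * L * (L + 1) / 2 + 3 * tv, ?_, ?_, ?_, ?_⟩
  · rintro x ⟨hx0, hx1⟩
    rcases lt_or_eq_of_le hx1 with h1 | h1
    · rw [costC_eval x tv 0 0 (floor_eq' x 0 (by norm_num; linarith) (by norm_num; linarith))
        (floor_eq' _ 0 (by norm_num; linarith) (by norm_num; linarith))]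
      push_cast
      ring
    · rw [costC_eval x tv 1 0 (floor_eq' x 1 (by norm_num; linarith) (by norm_num; linarith))
        (floor_eq' _ 0 (by norm_num; linarith) (by norm_num; linarith))]
      push_cast
      linear_combination 3 * h1
  · rintro x ⟨hx1, hx2⟩
    have hx2' : x ≤ 2 := by linarith
    rcases lt_or_eq_of_le hx2' with h2 | h2
    · rw [costC_eval x tv 1 0 (floor_eq' x 1 (by norm_num; linarith) (by norm_num; linarith))
        (floor_eq' _ 0 (by norm_num; linarith) (by norm_num; linarith))]
      push_cast
      ring
    · have htv : 3 ≤ tv := by rw [h2] at hx2; linarith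
      rw [costC_eval x tv 2 0 (floor_eq' x 2 (by norm_num; linarith) (by norm_num; linarith))
        (floor_eq' _ 0 (by norm_num; linarith) (by norm_num; linarith))]
      push_cast
      linear_combination 3 * h2
  · rintro x ⟨hx1, hx2⟩
    have hx1' : (1 : ℝ) ≤ x := by linarith
    rcases lt_or_eq_of_le hx2 with h2 | h2
    · rcases lt_or_eq_of_le hx1 with h1 | h1
      · rw [costC_eval x tv 1 (-1) (floor_eq' x 1 (by norm_num; linarith) (by norm_num; linarith))
          (floor_eq' _ (-1) (by norm_num; linarith) (by norm_num; linarith))]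
        push_cast
        ring
      · rw [costC_eval x tv 1 0 (floor_eq' x 1 (by norm_num; linarith) (by norm_num; linarith))
          (floor_eq' _ 0 (by norm_num; linarith) (by norm_num; linarith))]
        push_cast
        linear_combination -9 * h1
    · rcases lt_or_eq_of_le h3 with htv | htv
      · rw [costC_eval x tv 2 (-1) (floor_eq' x 2 (by norm_num; linarith) (by norm_num; linarith))
          (floor_eq' _ (-1) (by norm_num; linarith) (by norm_num; linarith))]
        push_cast
        linear_combination 3 * h2
      · rw [costC_eval x tv 2 0 (floor_eq' x 2 (by norm_num; linarith) (by norm_num; linarith))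
          (floor_eq' _ 0 (by norm_num; linarith) (by norm_num; linarith))]
        push_cast
        linear_combination 12 * h2 - 3 * htv
  · rintro x ⟨hx2, hx3⟩
    rcases lt_or_eq_of_le hx3 with h3' | h3'
    · rcases lt_or_eq_of_le hx2 with h2 | h2
      · rw [costC_eval x tv 2 (-1) (floor_eq' x 2 (by norm_num; linarith) (by norm_num; linarith))
          (floor_eq' _ (-1) (by norm_num; linarith) (by norm_num; linarith))]
        push_cast
        ring
      · rcases lt_or_eq_of_le h3 with htv | htv
        · rw [costC_eval x tv 2 (-1) (floor_eq' x 2 (by norm_num; linarith) (by norm_num; linarith))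
            (floor_eq' _ (-1) (by norm_num; linarith) (by norm_num; linarith))]
          push_cast
          ring
        · rw [costC_eval x tv 2 0 (floor_eq' x 2 (by norm_num; linarith) (by norm_num; linarith))
            (floor_eq' _ 0 (by norm_num; linarith) (by norm_num; linarith))]
          push_cast
          linear_combination -9 * h2 - 3 * htv
    · rw [costC_eval x tv 3 (-1) (floor_eq' x 3 (by norm_num; linarith) (by norm_num; linarith))
        (floor_eq' _ (-1) (by norm_num; linarith) (by norm_num; linarith))]
      push_cast
      linear_combination 3 * h3'
end

section
/- Let c be defined by c(t, t∨) = 3(k+1)t + ℓt∨ − (t∨ − 9m)(t + 3m) − (3k(k+1) + 3ℓ(ℓ+1) + 9m(3m−1))/2 with k = ⌊t⌋, ℓ = ⌊t∨/3⌋, m = ⌊(t∨ − 3t)/9 + 1/3⌋. Then the function (t, t∨) ↦ c(t, t∨) is continuous on ℝ². -/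
noncomputable def floorPrimitive (x : ℝ) : ℝ := ⌊x⌋ * x - ⌊x⌋ * (⌊x⌋ + 1) / 2

lemma floorPrimitive_eq_fract (x : ℝ) :
    floorPrimitive x = (x ^ 2 - x) / 2 + Int.fract x * (1 - Int.fract x) / 2 := by
  rw [floorPrimitive, Int.fract]
  ring

lemma continuous_floorPrimitive : Continuous floorPrimitive := by
  have hfract : Continuous fun x : ℝ => Int.fract x * (1 - Int.fract x) :=
    ContinuousOn.comp_fract'' (f := fun y : ℝ => y * (1 - y)) (by fun_prop) (by norm_num)
  simp only [funext floorPrimitive_eq_fract]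
  fun_prop

lemma costC_eq_floorPrimitive (t tv : ℝ) :
    costC t tv = 3 * floorPrimitive t + 3 * floorPrimitive (tv / 3)
      - 27 * floorPrimitive ((tv - 3 * t) / 9 + 1 / 3) + 3 * t - t * tv := by
  simp only [costC, floorPrimitive]
  ring

theorem costC_continuous : Continuous fun p : ℝ × ℝ => costC p.1 p.2 := by
  simp only [costC_eq_floorPrimitive]
  have := continuous_floorPrimitive
  fun_prop
end
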